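/- Let ℓ₀ : (0,1) → (0,∞) be non-decreasing with ∫₀¹ ℓ₀(r) r^{−1} dr = ∞, and assume Φ₀(r) = r^{β₀} ℓ₀(r) for all r ∈ (0,1), where β₀ is the lower Matuszewska index of Φ₀. Let F : ℍ₋₁ → [0,∞) be Borel and satisfy F(y) ≥ C_F^{−1} 𝟙_{{|ỹ| ≤ (y_d+1) ∨ 1}} Φ₀(((y_d+1) ∧ 1)/|y|) for all y ∈ ℍ₋₁ \ {0}, for some C_F ≥ 1. Then lim_{q → (α+β₀)⁻} C(α,q,F) = ∞, i.e., the values C(α,q,F) ∈ [0,∞] tend to ∞ as q increases to α+β₀. -/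

import Mathlib

open MeasureTheory Metric Set Filter
open scoped ENNReal NNReal Topology

noncomputable section

/-- The first `n` coordinates of a point of `ℝ^(n+1)`. -/
def tilde {n : ℕ} (x : EuclideanSpace ℝ (Fin (n + 1))) : EuclideanSpace ℝ (Fin n) :=
  WithLp.toLp 2 (fun i : Fin n => x i.castSucc)

/-- The last ("vertical") coordinate of a point of `ℝ^(n+1)`. -/
def vert {n : ℕ} (x : EuclideanSpace ℝ (Fin (n + 1))) : ℝ := x (Fin.last n)

/-- The point `(z, t) ∈ ℝ^(n+1)`. -/
def emb {n : ℕ} (z : EuclideanSpace ℝ (Fin n)) (t : ℝ) : EuclideanSpace ℝ (Fin (n + 1)) :=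
  WithLp.toLp 2 (Fin.snoc (α := fun _ => ℝ) (fun i => z i) t)

/-- The half-space `ℍ₋₁ = {x : x_d > -1}`. -/
def Hm1 (n : ℕ) : Set (EuclideanSpace ℝ (Fin (n + 1))) := {x | -1 < vert x}

/-- The lower Matuszewska index of a positive function `Φ` at zero. -/
def lowerMatIdx (Φ : ℝ → ℝ) : ℝ :=
  sSup {β : ℝ | ∃ a > 0, ∀ r s : ℝ, 0 < s → s ≤ r → r ≤ 1 → a * (r / s) ^ β ≤ Φ r / Φ s}

/-- The constant `C(α,q,F)` (with values in `[0,∞]`). -/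
def Cconst (n : ℕ) (α q : ℝ) (F : EuclideanSpace ℝ (Fin (n + 1)) → ℝ) : ℝ≥0∞ :=
  ∫⁻ u : EuclideanSpace ℝ (Fin n), ∫⁻ s in Set.Ioo (0 : ℝ) 1,
    ENNReal.ofReal ((‖u‖ ^ 2 + 1) ^ (-((n + 1 : ℝ) + α) / 2)
      * ((s ^ q - 1) * (1 - s ^ (α - 1 - q)) * (1 - s) ^ (-1 - α))
      * F (emb ((s - 1) • u) (s - 1)))

lemma tilde_emb {n : ℕ} (z : EuclideanSpace ℝ (Fin n)) (t : ℝ) : tilde (emb z t) = z := by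
  ext i; simp [tilde, emb]

lemma vert_emb {n : ℕ} (z : EuclideanSpace ℝ (Fin n)) (t : ℝ) : vert (emb z t) = t := by
  simp [vert, emb]

lemma vert_zero {n : ℕ} : vert (0 : EuclideanSpace ℝ (Fin (n + 1))) = 0 := rfl

lemma norm_emb {n : ℕ} (z : EuclideanSpace ℝ (Fin n)) (t : ℝ) :
    ‖emb z t‖ = Real.sqrt (‖z‖ ^ 2 + t ^ 2) := by
  rw [EuclideanSpace.norm_eq]
  congr 1
  rw [Fin.sum_univ_castSucc]
  have : ∀ i : Fin n, ‖emb z t i.castSucc‖ ^ 2 = ‖z i‖ ^ 2 := by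
    intro i; simp [emb]
  rw [Finset.sum_congr rfl fun i _ => this i]
  have hz : ∑ i : Fin n, ‖z i‖ ^ 2 = ‖z‖ ^ 2 := by
    rw [EuclideanSpace.norm_eq, Real.sq_sqrt (by positivity)]
  rw [hz]
  simp [emb, Real.norm_eq_abs, sq_abs]


set_option maxHeartbeats 1000000 in
theorem stmt_9 {n : ℕ} (hn : 1 ≤ n) (α : ℝ) (hα : 0 < α) (hα2 : α < 2)
    (Φ₀ : ℝ → ℝ) (hΦmeas : Measurable Φ₀) (hΦpos : ∀ r : ℝ, 0 < r → 0 < Φ₀ r)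
    (hΦone : ∀ r : ℝ, 1 ≤ r → Φ₀ r = 1)
    (b₀ B₀ cL cU : ℝ) (hb₀ : 0 ≤ b₀) (hbB : b₀ ≤ B₀) (hcL : 0 < cL) (hcU : 0 < cU)
    (hΦscale : ∀ r s : ℝ, 0 < s → s ≤ r → r ≤ 1 →
      cL * (r / s) ^ b₀ ≤ Φ₀ r / Φ₀ s ∧ Φ₀ r / Φ₀ s ≤ cU * (r / s) ^ B₀)
    (ℓ₀ : ℝ → ℝ) (hℓ₀pos : ∀ r : ℝ, 0 < r → r < 1 → 0 < ℓ₀ r)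
    (hℓ₀mono : ∀ r s : ℝ, 0 < r → r ≤ s → s < 1 → ℓ₀ r ≤ ℓ₀ s)
    (hℓ₀int : (∫⁻ r in Set.Ioo (0 : ℝ) 1, ENNReal.ofReal (ℓ₀ r / r)) = ⊤)
    (hΦeq : ∀ r : ℝ, 0 < r → r < 1 → Φ₀ r = r ^ lowerMatIdx Φ₀ * ℓ₀ r)
    (F : EuclideanSpace ℝ (Fin (n + 1)) → ℝ) (hFmeas : Measurable F)
    (hFnn : ∀ y ∈ Hm1 n, 0 ≤ F y)
    (CF : ℝ) (hCF : 1 ≤ CF)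
    (hFlow : ∀ y ∈ Hm1 n, y ≠ 0 → ‖tilde y‖ ≤ max (vert y + 1) 1 →
      CF⁻¹ * Φ₀ (min (vert y + 1) 1 / ‖y‖) ≤ F y) :
    Tendsto (fun q => Cconst n α q F) (𝓝[<] (α + lowerMatIdx Φ₀)) (𝓝 (⊤ : ℝ≥0∞)) := by
  
  have hCF0 : (0:ℝ) < CF := lt_of_lt_of_le one_pos hCF
  -- the set defining the lower Matuszewska index
  set S : Set ℝ :=
    {β' : ℝ | ∃ a > 0, ∀ r s : ℝ, 0 < s → s ≤ r → r ≤ 1 → a * (r / s) ^ β' ≤ Φ₀ r / Φ₀ s}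
    with hSdef
  have hSne : b₀ ∈ S := ⟨cL, hcL, fun r s hs hsr hr1 => (hΦscale r s hs hsr hr1).1⟩
  have hSub : ∀ β' ∈ S, β' ≤ B₀ := by
    rintro β' ⟨a, ha, hβ'⟩
    by_contra hlt
    push_neg at hlt
    have hppos : 0 < β' - B₀ := by linarith
    have key : ∀ s : ℝ, 0 < s → s ≤ 1 → a ≤ cU * s ^ (β' - B₀) := by
      intro s hs hs1
      have h1 := hβ' 1 s hs hs1 le_rfl
      have h2 := (hΦscale 1 s hs hs1 le_rfl).2
      have h3 : a * (1 / s) ^ β' ≤ cU * (1 / s) ^ B₀ := le_trans h1 h2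
      have e1 : (1 / s : ℝ) ^ β' = (s ^ β')⁻¹ := by
        rw [one_div, Real.inv_rpow hs.le]
      have e2 : (1 / s : ℝ) ^ B₀ = (s ^ B₀)⁻¹ := by
        rw [one_div, Real.inv_rpow hs.le]
      rw [e1, e2, ← div_eq_mul_inv, ← div_eq_mul_inv] at h3
      have hb' : (0:ℝ) < s ^ β' := Real.rpow_pos_of_pos hs _
      have hB' : (0:ℝ) < s ^ B₀ := Real.rpow_pos_of_pos hs _
      have h4 : a * s ^ B₀ ≤ cU * s ^ β' := by
        have := (div_le_div_iff₀ hb' hB').mp h3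
        linarith
      have h5 : s ^ β' = s ^ (β' - B₀) * s ^ B₀ := by
        rw [← Real.rpow_add hs]; congr 1; ring
      rw [h5, ← mul_assoc] at h4
      exact le_of_mul_le_mul_right h4 hB'
    set s : ℝ := min ((a / (2 * cU)) ^ (1 / (β' - B₀))) 1 with hsdef
    have hx : (0:ℝ) < a / (2 * cU) := by positivity
    have hs0 : 0 < s := lt_min (Real.rpow_pos_of_pos hx _) one_pos
    have h6 : s ^ (β' - B₀) ≤ a / (2 * cU) := by
      calc s ^ (β' - B₀) ≤ ((a / (2 * cU)) ^ (1 / (β' - B₀))) ^ (β' - B₀) :=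
            Real.rpow_le_rpow hs0.le (min_le_left _ _) hppos.le
        _ = a / (2 * cU) := by
            rw [← Real.rpow_mul hx.le, one_div, inv_mul_cancel₀ hppos.ne', Real.rpow_one]
    have h7 := key s hs0 (min_le_right _ _)
    have h8 : cU * (a / (2 * cU)) = a / 2 := by field_simp
    linarith [mul_le_mul_of_nonneg_left h6 hcU.le, h7, h8, ha]
  have hβub : lowerMatIdx Φ₀ ≤ B₀ := csSup_le ⟨b₀, hSne⟩ hSub
  have hβlb : b₀ ≤ lowerMatIdx Φ₀ := le_csSup ⟨B₀, hSub⟩ hSne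
  set β : ℝ := lowerMatIdx Φ₀ with hβdef
  have hβ0 : 0 ≤ β := hb₀.trans hβlb
  -- upper bound for Φ₀ on (0,1]
  have hΦub : ∀ s : ℝ, 0 < s → s ≤ 1 → Φ₀ s ≤ cL⁻¹ := by
    intro s hs hs1
    have h1 := (hΦscale 1 s hs hs1 le_rfl).1
    rw [hΦone 1 le_rfl] at h1
    have h2 : (1:ℝ) ≤ (1 / s) ^ b₀ := Real.one_le_rpow (by rw [le_div_iff₀ hs]; linarith) hb₀
    have h3 : cL ≤ 1 / Φ₀ s := le_trans (le_mul_of_one_le_right hcL.le h2) h1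
    have hΦs := hΦpos s hs
    rw [le_div_iff₀ hΦs] at h3
    rw [inv_eq_one_div]
    rw [le_div_iff₀ hcL]
    linarith
  -- comparison constant
  set c₁ : ℝ := min cL (cU * Real.sqrt 2 ^ B₀)⁻¹ with hc₁def
  have hsqrt2pos : (0:ℝ) < Real.sqrt 2 := Real.sqrt_pos.mpr (by norm_num)
  have hc₁pos : 0 < c₁ :=
    lt_min hcL (inv_pos.mpr (mul_pos hcU (Real.rpow_pos_of_pos hsqrt2pos _)))
  have hcomp : ∀ r s : ℝ, 0 < r → r ≤ 1 → 0 < s → s ≤ 1 → s ≤ Real.sqrt 2 * r →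
      c₁ * Φ₀ s ≤ Φ₀ r := by
    intro r s hr hr1 hs hs1 hsr
    have hΦs := hΦpos s hs
    rcases le_or_gt s r with hle | hlt
    · have h1 := (hΦscale r s hs hle hr1).1
      have h2 : (1:ℝ) ≤ (r / s) ^ b₀ := Real.one_le_rpow ((one_le_div hs).mpr hle) hb₀
      have h3 : cL ≤ Φ₀ r / Φ₀ s := le_trans (le_mul_of_one_le_right hcL.le h2) h1
      have h4 := (le_div_iff₀ hΦs).mp h3
      calc c₁ * Φ₀ s ≤ cL * Φ₀ s := mul_le_mul_of_nonneg_right (min_le_left _ _) hΦs.le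
        _ ≤ Φ₀ r := h4
    · have h1 := (hΦscale s r hr hlt.le hs1).2
      have hB0 : 0 ≤ B₀ := hb₀.trans hbB
      have h2 : (s / r) ^ B₀ ≤ Real.sqrt 2 ^ B₀ :=
        Real.rpow_le_rpow (by positivity) ((div_le_iff₀ hr).mpr hsr) hB0
      have h3 : Φ₀ s / Φ₀ r ≤ cU * Real.sqrt 2 ^ B₀ :=
        h1.trans (mul_le_mul_of_nonneg_left h2 hcU.le)
      have h4 := (div_le_iff₀ (hΦpos r hr)).mp h3
      have hD : (0:ℝ) < cU * Real.sqrt 2 ^ B₀ := mul_pos hcU (Real.rpow_pos_of_pos hsqrt2pos _)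
      calc c₁ * Φ₀ s ≤ (cU * Real.sqrt 2 ^ B₀)⁻¹ * Φ₀ s :=
            mul_le_mul_of_nonneg_right (min_le_right _ _) hΦs.le
        _ ≤ Φ₀ r := by rw [inv_mul_le_iff₀ hD]; linarith
  -- the divergent integral in terms of Φ₀
  set h' : ℝ → ℝ≥0∞ := fun s => ENNReal.ofReal (Φ₀ s * s ^ (-β - 1)) with hh'def
  have hh'meas : Measurable h' := (hΦmeas.mul (measurable_id.pow measurable_const)).ennreal_ofReal
  have hcongr : (∫⁻ s in Ioo (0:ℝ) 1, ENNReal.ofReal (ℓ₀ s / s)) = ∫⁻ s in Ioo (0:ℝ) 1, h' s := by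
    refine setLIntegral_congr_fun measurableSet_Ioo (fun s hs => ?_)
    obtain ⟨hs0, hs1⟩ := hs
    have hΦ := hΦeq s hs0 hs1
    have hsb : (0:ℝ) < s ^ β := Real.rpow_pos_of_pos hs0 β
    have hℓ : ℓ₀ s = Φ₀ s / s ^ β := by rw [hΦ]; field_simp
    have hneg : s ^ (-β - 1) = (s ^ β * s)⁻¹ := by
      rw [show -β - 1 = -(β + 1) by ring, Real.rpow_neg hs0.le, Real.rpow_add hs0, Real.rpow_one]
    rw [hh'def]
    congr 1
    rw [hℓ, hneg, div_div, div_eq_mul_inv]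
  have htail : (∫⁻ s in Ico (2⁻¹:ℝ) 1, h' s) ≠ ⊤ := by
    have hb : ∀ s ∈ Ico (2⁻¹:ℝ) 1, h' s ≤ ENNReal.ofReal (cL⁻¹ * 2 ^ (β + 1)) := by
      intro s hs
      obtain ⟨hs2, hs1⟩ := hs
      have hs0 : (0:ℝ) < s := lt_of_lt_of_le (by norm_num) hs2
      apply ENNReal.ofReal_le_ofReal
      have h1 : Φ₀ s ≤ cL⁻¹ := hΦub s hs0 hs1.le
      have h2 : s ^ (-β - 1) ≤ (2:ℝ) ^ (β + 1) := by
        have h3 := Real.rpow_le_rpow_of_nonpos (by norm_num : (0:ℝ) < 2⁻¹) hs2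
          (by linarith : -β - 1 ≤ 0)
        calc s ^ (-β - 1) ≤ (2⁻¹:ℝ) ^ (-β - 1) := h3
          _ = (2:ℝ) ^ (β + 1) := by
              rw [show -β - 1 = -(β + 1) by ring, Real.inv_rpow (by norm_num),
                Real.rpow_neg (by norm_num), inv_inv]
      exact mul_le_mul h1 h2 (Real.rpow_nonneg hs0.le _) (by positivity)
    have hle : (∫⁻ s in Ico (2⁻¹:ℝ) 1, h' s)
        ≤ ENNReal.ofReal (cL⁻¹ * 2 ^ (β + 1)) * volume (Ico (2⁻¹:ℝ) 1) := by
      calc (∫⁻ s in Ico (2⁻¹:ℝ) 1, h' s)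
          ≤ ∫⁻ _ in Ico (2⁻¹:ℝ) 1, ENNReal.ofReal (cL⁻¹ * 2 ^ (β + 1)) :=
            setLIntegral_mono' measurableSet_Ico hb
        _ = ENNReal.ofReal (cL⁻¹ * 2 ^ (β + 1)) * volume (Ico (2⁻¹:ℝ) 1) :=
            setLIntegral_const _ _
    refine ne_top_of_le_ne_top ?_ hle
    exact (ENNReal.mul_lt_top ENNReal.ofReal_lt_top (by rw [Real.volume_Ico]; exact ENNReal.ofReal_lt_top)).ne
  have hhead : (∫⁻ s in Ioo (0:ℝ) (2⁻¹), h' s) = ⊤ := by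
    have hunion : Ioo (0:ℝ) 1 = Ioo 0 2⁻¹ ∪ Ico 2⁻¹ 1 :=
      (Ioo_union_Ico_eq_Ioo (by norm_num) (by norm_num)).symm
    have hdisj : Disjoint (Ioo (0:ℝ) 2⁻¹) (Ico (2⁻¹:ℝ) 1) := by
      rw [Set.disjoint_left]
      rintro x ⟨_, hx2⟩ ⟨hx3, _⟩
      linarith
    have htot := hℓ₀int
    rw [hcongr, hunion, lintegral_union measurableSet_Ico hdisj] at htot
    by_contra hne
    exact (ENNReal.add_ne_top.mpr ⟨hne, htail⟩) htot
  -- exhaustion of (0, 1/2)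
  set δ : ℕ → ℝ := fun m => ((m:ℝ) + 3)⁻¹ with hδdef
  have hδpos : ∀ m, 0 < δ m := fun m => by positivity
  have hδlt : ∀ m, δ m < 2⁻¹ := by
    intro m
    rw [hδdef]
    have h3 : (2:ℝ) < (m:ℝ) + 3 := by
      have := Nat.cast_nonneg (α := ℝ) m; linarith
    exact inv_strictAnti₀ (by norm_num) h3
  have hsup : (⨆ m : ℕ, ∫⁻ s in Ioo (δ m) 2⁻¹, h' s) = ⊤ := by
    have hind : ∀ m : ℕ, (∫⁻ s in Ioo (δ m) 2⁻¹, h' s)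
        = ∫⁻ s, (Ioo (δ m) 2⁻¹).indicator h' s := fun m =>
      (lintegral_indicator measurableSet_Ioo h').symm
    simp_rw [hind]
    rw [← lintegral_iSup (fun m => hh'meas.indicator measurableSet_Ioo)]
    · have hpt : ∀ s : ℝ, (⨆ m : ℕ, (Ioo (δ m) 2⁻¹).indicator h' s)
          = (Ioo (0:ℝ) 2⁻¹).indicator h' s := by
        intro s
        by_cases hs : s ∈ Ioo (0:ℝ) 2⁻¹
        · obtain ⟨hs0, hs2⟩ := hs
          obtain ⟨m, hm⟩ : ∃ m : ℕ, δ m < s := by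
            obtain ⟨m, hm⟩ := exists_nat_gt s⁻¹
            refine ⟨m, ?_⟩
            rw [hδdef]
            have h1 : s⁻¹ < (m:ℝ) + 3 := by linarith
            calc ((m:ℝ) + 3)⁻¹ < (s⁻¹)⁻¹ := inv_strictAnti₀ (by positivity) h1
              _ = s := inv_inv s
          apply le_antisymm
          · exact iSup_le fun k => Set.indicator_le_indicator_of_subset
              (Ioo_subset_Ioo (hδpos k).le le_rfl) (fun _ => zero_le) s
          · refine le_iSup_of_le m ?_
            rw [Set.indicator_of_mem (show s ∈ Ioo (δ m) 2⁻¹ from ⟨hm, hs2⟩) h',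
              Set.indicator_of_mem (show s ∈ Ioo (0:ℝ) 2⁻¹ from ⟨hs0, hs2⟩) h']
        · rw [Set.indicator_of_notMem hs]
          refine le_antisymm (iSup_le fun k => ?_) zero_le
          rw [Set.indicator_of_notMem
            (fun hk => hs (Ioo_subset_Ioo (hδpos k).le le_rfl hk))]
      calc (∫⁻ s, ⨆ m : ℕ, (Ioo (δ m) 2⁻¹).indicator h' s)
          = ∫⁻ s, (Ioo (0:ℝ) 2⁻¹).indicator h' s := lintegral_congr hpt
        _ = ∫⁻ s in Ioo (0:ℝ) 2⁻¹, h' s := lintegral_indicator measurableSet_Ioo h'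
        _ = ⊤ := hhead
    · intro a b hab
      intro s
      refine Set.indicator_le_indicator_of_subset (Ioo_subset_Ioo ?_ le_rfl)
        (fun _ => zero_le) s
      rw [hδdef]
      have : (a:ℝ) + 3 ≤ (b:ℝ) + 3 := by
        have := (Nat.cast_le (α := ℝ)).mpr hab; linarith
      exact inv_anti₀ (by positivity) this
  -- constants
  have hq₁pos : (0:ℝ) < (α + β) / 2 := by linarith
  set γ : ℝ := (α + β) / 2 + 1 - α with hγdef
  have hγpos : 0 < γ := by rw [hγdef]; linarith
  set c₄ : ℝ := 1 - (2⁻¹:ℝ) ^ ((α + β) / 2) with hc₄def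
  have hc₄pos : 0 < c₄ := by
    have := Real.rpow_lt_one (by norm_num : (0:ℝ) ≤ 2⁻¹) (by norm_num) hq₁pos
    rw [hc₄def]; linarith
  set c₅ : ℝ := 1 - (2⁻¹:ℝ) ^ γ with hc₅def
  have hc₅pos : 0 < c₅ := by
    have := Real.rpow_lt_one (by norm_num : (0:ℝ) ≤ 2⁻¹) (by norm_num) hγpos
    rw [hc₅def]; linarith
  set a₀ : ℝ := (2:ℝ) ^ (-((n + 1 : ℝ) + α) / 2) with ha₀def
  have ha₀pos : 0 < a₀ := Real.rpow_pos_of_pos (by norm_num) _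
  set Cs : ℝ := a₀ * (c₄ * c₅) * (CF⁻¹ * c₁) with hCsdef
  have hCspos : 0 < Cs := by
    apply mul_pos (mul_pos ha₀pos (mul_pos hc₄pos hc₅pos))
    exact mul_pos (inv_pos.mpr hCF0) hc₁pos
  set B : Set (EuclideanSpace ℝ (Fin n)) := Metric.closedBall 0 1 with hBdef
  set K : ℝ≥0∞ := volume B * ENNReal.ofReal (Cs * 2⁻¹) with hKdef
  have hK0 : K ≠ 0 := by
    rw [hKdef]
    apply mul_ne_zero
    · exact ((measure_ball_pos volume (0 : EuclideanSpace ℝ (Fin n)) one_pos).trans_le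
        (measure_mono ball_subset_closedBall)).ne'
    · exact (ENNReal.ofReal_pos.mpr (mul_pos hCspos (by norm_num))).ne'
  have hKtop : K ≠ ⊤ := by
    rw [hKdef]
    exact (ENNReal.mul_lt_top measure_closedBall_lt_top ENNReal.ofReal_lt_top).ne
  -- main argument
  rw [ENNReal.tendsto_nhds_top_iff_nnreal]
  intro x
  obtain ⟨m, hm⟩ : ∃ m : ℕ, (x : ℝ≥0∞) * K⁻¹ < ∫⁻ s in Ioo (δ m) 2⁻¹, h' s := by
    have hxK : (x : ℝ≥0∞) * K⁻¹ < ⊤ :=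
      ENNReal.mul_lt_top ENNReal.coe_lt_top (ENNReal.inv_lt_top.mpr (pos_iff_ne_zero.mpr hK0))
    rw [← hsup] at hxK
    exact lt_iSup_iff.mp hxK
  have e1 : ∀ᶠ q in 𝓝[<] (α + β), (α + β) / 2 < q :=
    eventually_nhdsWithin_of_eventually_nhds (eventually_gt_nhds (by linarith))
  have e2 : ∀ᶠ q in 𝓝[<] (α + β), q ∈ Iio (α + β) := eventually_mem_nhdsWithin
  have e3 : ∀ᶠ q in 𝓝[<] (α + β), 2⁻¹ < δ m ^ (α + β - q) := by
    have hcont : Continuous fun q : ℝ => δ m ^ (α + β - q) := by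
      have : (fun q : ℝ => δ m ^ (α + β - q))
          = fun q : ℝ => Real.exp (Real.log (δ m) * (α + β - q)) := by
        funext q; rw [Real.rpow_def_of_pos (hδpos m)]
      rw [this]
      exact Real.continuous_exp.comp (continuous_const.mul (continuous_const.sub continuous_id))
    have htend : Tendsto (fun q : ℝ => δ m ^ (α + β - q)) (𝓝 (α + β)) (𝓝 1) := by
      have := hcont.tendsto (α + β)
      simpa [Real.rpow_zero] using this
    exact eventually_nhdsWithin_of_eventually_nhds
      (htend.eventually (eventually_gt_nhds (by norm_num)))
  filter_upwards [e1, e2, e3] with q hq1 hq2 hq3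
  have hKJ : K * (∫⁻ s in Ioo (δ m) 2⁻¹, h' s) ≤ Cconst n α q F := by
    set J : ℝ≥0∞ := ∫⁻ s in Ioo (δ m) 2⁻¹, h' s with hJdef
    have hq0 : (0:ℝ) < q := lt_trans hq₁pos hq1
    have hqL : q < α + β := hq2
    have hpt : ∀ u : EuclideanSpace ℝ (Fin n), ‖u‖ ≤ 1 → ∀ s ∈ Ioo (δ m) (2⁻¹:ℝ),
        ENNReal.ofReal (Cs * 2⁻¹ * (Φ₀ s * s ^ (-β - 1))) ≤
        ENNReal.ofReal ((‖u‖ ^ 2 + 1) ^ (-((n + 1 : ℝ) + α) / 2)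
          * ((s ^ q - 1) * (1 - s ^ (α - 1 - q)) * (1 - s) ^ (-1 - α))
          * F (emb ((s - 1) • u) (s - 1))) := by
      intro u hu s hs
      obtain ⟨hsδ, hs2⟩ := hs
      have hs0 : (0:ℝ) < s := lt_trans (hδpos m) hsδ
      have hs1 : s < 1 := lt_trans hs2 (by norm_num)
      have h1s : (0:ℝ) < 1 - s := by linarith
      apply ENNReal.ofReal_le_ofReal
      have hu1 : ‖u‖ ^ 2 ≤ 1 := by
        have h := pow_le_pow_left₀ (norm_nonneg u) hu 2
        simpa using h
      have hu2 : ‖u‖ ^ 2 + 1 ≤ 2 := by linarith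
      -- F lower bound
      have h1 : ‖(s - 1) • u‖ = (1 - s) * ‖u‖ := by
        rw [norm_smul, Real.norm_eq_abs, abs_of_nonpos (by linarith), neg_sub]
      have hnormy : ‖emb ((s - 1) • u) (s - 1)‖ = (1 - s) * Real.sqrt (‖u‖ ^ 2 + 1) := by
        rw [norm_emb, h1]
        rw [show ((1 - s) * ‖u‖) ^ 2 + (s - 1) ^ 2 = (1 - s) ^ 2 * (‖u‖ ^ 2 + 1) by ring]
        rw [Real.sqrt_mul (sq_nonneg _), Real.sqrt_sq h1s.le]
      have hsqrt_ge1 : (1:ℝ) ≤ Real.sqrt (‖u‖ ^ 2 + 1) := by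
        have h := Real.sqrt_le_sqrt (le_add_of_nonneg_left (sq_nonneg ‖u‖) :
          (1:ℝ) ≤ ‖u‖ ^ 2 + 1)
        rwa [Real.sqrt_one] at h
      have hsqrt_le : Real.sqrt (‖u‖ ^ 2 + 1) ≤ Real.sqrt 2 :=
        Real.sqrt_le_sqrt hu2
      have hny_pos : 0 < ‖emb ((s - 1) • u) (s - 1)‖ := by
        rw [hnormy]; exact mul_pos h1s (lt_of_lt_of_le one_pos hsqrt_ge1)
      set y := emb ((s - 1) • u) (s - 1) with hydef
      set r := s / ‖y‖ with hrdef
      have hr0 : 0 < r := div_pos hs0 hny_pos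
      have hr1 : r ≤ 1 := by
        rw [hrdef, div_le_one hny_pos, hnormy]
        have h2 : (1 - s) * 1 ≤ (1 - s) * Real.sqrt (‖u‖ ^ 2 + 1) :=
          mul_le_mul_of_nonneg_left hsqrt_ge1 h1s.le
        linarith
      have hyle : ‖y‖ ≤ Real.sqrt 2 := by
        rw [hnormy]
        calc (1 - s) * Real.sqrt (‖u‖ ^ 2 + 1) ≤ 1 * Real.sqrt 2 :=
              mul_le_mul (by linarith) hsqrt_le (Real.sqrt_nonneg _) one_pos.le
          _ = Real.sqrt 2 := one_mul _
      have hs_sqrt : s ≤ Real.sqrt 2 * r := by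
        calc s = (s / ‖y‖) * ‖y‖ := (div_mul_cancel₀ s hny_pos.ne').symm
          _ ≤ (s / ‖y‖) * Real.sqrt 2 :=
              mul_le_mul_of_nonneg_left hyle (div_pos hs0 hny_pos).le
          _ = Real.sqrt 2 * r := by rw [hrdef]; ring
      have hΦr : c₁ * Φ₀ s ≤ Φ₀ r := hcomp r s hr0 hr1 hs0 (by linarith) hs_sqrt
      have hmem : y ∈ Hm1 n := by
        show -1 < vert y
        rw [hydef, vert_emb]; linarith
      have hFynn : 0 ≤ F y := hFnn y hmem
      have hFy : CF⁻¹ * (c₁ * Φ₀ s) ≤ F y := by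
        have hne : y ≠ 0 := by
          intro h0
          have hv : vert y = 0 := by rw [h0]; exact vert_zero
          rw [hydef, vert_emb] at hv; linarith
        have htil : ‖tilde y‖ ≤ max (vert y + 1) 1 := by
          rw [hydef, tilde_emb, vert_emb]
          have hub : ‖(s - 1) • u‖ ≤ 1 := by
            rw [h1]
            calc (1 - s) * ‖u‖ ≤ 1 * 1 :=
                  mul_le_mul (by linarith) hu (norm_nonneg u) one_pos.le
              _ = 1 := one_mul 1
          exact le_trans hub (le_max_right _ _)
        have hlow := hFlow y hmem hne htil
        have hmin : min (vert y + 1) 1 = s := by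
          rw [hydef, vert_emb, show s - 1 + 1 = s by ring]
          exact min_eq_left (by linarith)
        rw [hmin, ← hrdef] at hlow
        calc CF⁻¹ * (c₁ * Φ₀ s) ≤ CF⁻¹ * Φ₀ r :=
              mul_le_mul_of_nonneg_left hΦr (inv_nonneg.mpr hCF0.le)
          _ ≤ F y := hlow
      -- kernel bounds
      have hsq1 : s ^ q ≤ (2⁻¹:ℝ) ^ ((α + β) / 2) := by
        calc s ^ q ≤ s ^ ((α + β) / 2) :=
              Real.rpow_le_rpow_of_exponent_ge hs0 hs1.le hq1.le
          _ ≤ (2⁻¹:ℝ) ^ ((α + β) / 2) := Real.rpow_le_rpow hs0.le hs2.le hq₁pos.le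
      have hsq2 : s ^ (q + 1 - α) ≤ (2⁻¹:ℝ) ^ γ := by
        calc s ^ (q + 1 - α) ≤ s ^ γ :=
              Real.rpow_le_rpow_of_exponent_ge hs0 hs1.le (by rw [hγdef]; linarith)
          _ ≤ (2⁻¹:ℝ) ^ γ := Real.rpow_le_rpow hs0.le hs2.le hγpos.le
      have hprod : s ^ (α - 1 - q) * s ^ (q + 1 - α) = 1 := by
        rw [← Real.rpow_add hs0, show α - 1 - q + (q + 1 - α) = 0 by ring, Real.rpow_zero]
      have hXnn : 0 ≤ s ^ (α - 1 - q) := Real.rpow_nonneg hs0.le _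
      have hx1 : c₄ ≤ 1 - s ^ q := by rw [hc₄def]; linarith
      have hx2 : c₅ ≤ 1 - s ^ (q + 1 - α) := by rw [hc₅def]; linarith
      have hG : c₄ * (c₅ * s ^ (α - 1 - q)) ≤ (s ^ q - 1) * (1 - s ^ (α - 1 - q)) := by
        have e : (s ^ q - 1) * (1 - s ^ (α - 1 - q))
            = (1 - s ^ q) * (s ^ (α - 1 - q) * (1 - s ^ (q + 1 - α))) := by
          linear_combination (1 - s ^ q) * hprod
        rw [e]
        calc c₄ * (c₅ * s ^ (α - 1 - q)) ≤ (1 - s ^ q) * (c₅ * s ^ (α - 1 - q)) :=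
              mul_le_mul_of_nonneg_right hx1 (mul_nonneg hc₅pos.le hXnn)
          _ ≤ (1 - s ^ q) * (s ^ (α - 1 - q) * (1 - s ^ (q + 1 - α))) := by
              refine mul_le_mul_of_nonneg_left ?_ (by linarith : (0:ℝ) ≤ 1 - s ^ q)
              rw [mul_comm c₅ _]
              exact mul_le_mul_of_nonneg_left hx2 hXnn
      have hWnn : 0 ≤ (s ^ q - 1) * (1 - s ^ (α - 1 - q)) :=
        le_trans (mul_nonneg hc₄pos.le (mul_nonneg hc₅pos.le hXnn)) hG
      have hG3 : (1:ℝ) ≤ (1 - s) ^ (-1 - α) := by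
        have h := Real.rpow_le_rpow_of_exponent_ge h1s (by linarith)
          (by linarith : -1 - α ≤ (0:ℝ))
        rwa [Real.rpow_zero] at h
      have hA : a₀ ≤ (‖u‖ ^ 2 + 1) ^ (-((n + 1 : ℝ) + α) / 2) := by
        rw [ha₀def]
        apply Real.rpow_le_rpow_of_nonpos (by positivity) hu2
        have hd : (0:ℝ) ≤ (n + 1 : ℝ) + α := by positivity
        linarith
      have hAnn : 0 ≤ (‖u‖ ^ 2 + 1) ^ (-((n + 1 : ℝ) + α) / 2) := le_trans ha₀pos.le hA
      have hΦsnn : (0:ℝ) ≤ Φ₀ s := (hΦpos s hs0).le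
      have hsplit : s ^ (α - 1 - q) = s ^ (α + β - q) * s ^ (-β - 1) := by
        rw [← Real.rpow_add hs0]; congr 1; ring
      have h2s : (2⁻¹:ℝ) ≤ s ^ (α + β - q) := by
        calc (2⁻¹:ℝ) ≤ δ m ^ (α + β - q) := hq3.le
          _ ≤ s ^ (α + β - q) := Real.rpow_le_rpow (hδpos m).le hsδ.le (by linarith)
      have hXnn' : (0:ℝ) ≤ s ^ (-β - 1) := Real.rpow_nonneg hs0.le _
      have step1 : Cs * 2⁻¹ * (Φ₀ s * s ^ (-β - 1)) ≤ Cs * (s ^ (α - 1 - q) * Φ₀ s) := by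
        have hnn : 0 ≤ Cs * (Φ₀ s * s ^ (-β - 1)) :=
          mul_nonneg hCspos.le (mul_nonneg hΦsnn hXnn')
        calc Cs * 2⁻¹ * (Φ₀ s * s ^ (-β - 1))
            = Cs * (Φ₀ s * s ^ (-β - 1)) * 2⁻¹ := by ring
          _ ≤ Cs * (Φ₀ s * s ^ (-β - 1)) * s ^ (α + β - q) :=
              mul_le_mul_of_nonneg_left h2s hnn
          _ = Cs * (s ^ (α - 1 - q) * Φ₀ s) := by rw [hsplit]; ring
      have step2 : Cs * (s ^ (α - 1 - q) * Φ₀ s)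
          ≤ (‖u‖ ^ 2 + 1) ^ (-((n + 1 : ℝ) + α) / 2)
            * ((s ^ q - 1) * (1 - s ^ (α - 1 - q))) * (CF⁻¹ * (c₁ * Φ₀ s)) := by
        have e : Cs * (s ^ (α - 1 - q) * Φ₀ s)
            = a₀ * (c₄ * (c₅ * s ^ (α - 1 - q))) * (CF⁻¹ * (c₁ * Φ₀ s)) := by
          rw [hCsdef]; ring
        rw [e]
        have m1 : a₀ * (c₄ * (c₅ * s ^ (α - 1 - q)))
            ≤ (‖u‖ ^ 2 + 1) ^ (-((n + 1 : ℝ) + α) / 2)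
              * ((s ^ q - 1) * (1 - s ^ (α - 1 - q))) :=
          mul_le_mul hA hG (mul_nonneg hc₄pos.le (mul_nonneg hc₅pos.le hXnn)) hAnn
        exact mul_le_mul_of_nonneg_right m1
          (mul_nonneg (inv_nonneg.mpr hCF0.le) (mul_nonneg hc₁pos.le hΦsnn))
      have step3 : (‖u‖ ^ 2 + 1) ^ (-((n + 1 : ℝ) + α) / 2)
            * ((s ^ q - 1) * (1 - s ^ (α - 1 - q))) * (CF⁻¹ * (c₁ * Φ₀ s))
          ≤ (‖u‖ ^ 2 + 1) ^ (-((n + 1 : ℝ) + α) / 2)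
            * ((s ^ q - 1) * (1 - s ^ (α - 1 - q)) * (1 - s) ^ (-1 - α)) * F y := by
        have m2 : (‖u‖ ^ 2 + 1) ^ (-((n + 1 : ℝ) + α) / 2)
              * ((s ^ q - 1) * (1 - s ^ (α - 1 - q))) * (CF⁻¹ * (c₁ * Φ₀ s))
            ≤ (‖u‖ ^ 2 + 1) ^ (-((n + 1 : ℝ) + α) / 2)
              * ((s ^ q - 1) * (1 - s ^ (α - 1 - q))) * F y :=
          mul_le_mul_of_nonneg_left hFy (mul_nonneg hAnn hWnn)
        refine le_trans m2 ?_
        have e2 : (‖u‖ ^ 2 + 1) ^ (-((n + 1 : ℝ) + α) / 2)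
              * ((s ^ q - 1) * (1 - s ^ (α - 1 - q)) * (1 - s) ^ (-1 - α)) * F y
            = ((‖u‖ ^ 2 + 1) ^ (-((n + 1 : ℝ) + α) / 2)
              * ((s ^ q - 1) * (1 - s ^ (α - 1 - q))) * F y) * (1 - s) ^ (-1 - α) := by
          ring
        rw [e2]
        exact le_mul_of_one_le_right (mul_nonneg (mul_nonneg hAnn hWnn) hFynn) hG3
      exact le_trans step1 (le_trans step2 step3)
    have hinner : ∀ u : EuclideanSpace ℝ (Fin n), ‖u‖ ≤ 1 →
        ENNReal.ofReal (Cs * 2⁻¹) * J ≤ ∫⁻ s in Ioo (0:ℝ) 1,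
          ENNReal.ofReal ((‖u‖ ^ 2 + 1) ^ (-((n + 1 : ℝ) + α) / 2)
            * ((s ^ q - 1) * (1 - s ^ (α - 1 - q)) * (1 - s) ^ (-1 - α))
            * F (emb ((s - 1) • u) (s - 1))) := by
      intro u hu
      calc ENNReal.ofReal (Cs * 2⁻¹) * J
          = ∫⁻ s in Ioo (δ m) 2⁻¹, ENNReal.ofReal (Cs * 2⁻¹) * h' s := by
            rw [hJdef, lintegral_const_mul' _ _ ENNReal.ofReal_ne_top]
        _ = ∫⁻ s in Ioo (δ m) 2⁻¹, ENNReal.ofReal (Cs * 2⁻¹ * (Φ₀ s * s ^ (-β - 1))) := by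
            refine setLIntegral_congr_fun measurableSet_Ioo (fun s _ => ?_)
            simp only [hh'def]
            rw [← ENNReal.ofReal_mul (mul_nonneg hCspos.le (by norm_num))]
        _ ≤ ∫⁻ s in Ioo (δ m) 2⁻¹,
            ENNReal.ofReal ((‖u‖ ^ 2 + 1) ^ (-((n + 1 : ℝ) + α) / 2)
              * ((s ^ q - 1) * (1 - s ^ (α - 1 - q)) * (1 - s) ^ (-1 - α))
              * F (emb ((s - 1) • u) (s - 1))) :=
            setLIntegral_mono' measurableSet_Ioo (hpt u hu)
        _ ≤ ∫⁻ s in Ioo (0:ℝ) 1,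
            ENNReal.ofReal ((‖u‖ ^ 2 + 1) ^ (-((n + 1 : ℝ) + α) / 2)
              * ((s ^ q - 1) * (1 - s ^ (α - 1 - q)) * (1 - s) ^ (-1 - α))
              * F (emb ((s - 1) • u) (s - 1))) :=
            lintegral_mono_set (Ioo_subset_Ioo (hδpos m).le (by norm_num))
    have hBmeas : MeasurableSet B := hBdef ▸ measurableSet_closedBall
    calc K * J = (ENNReal.ofReal (Cs * 2⁻¹) * J) * volume B := by rw [hKdef]; ring
      _ = ∫⁻ _ in B, ENNReal.ofReal (Cs * 2⁻¹) * J := (setLIntegral_const _ _).symm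
      _ ≤ ∫⁻ u in B, ∫⁻ s in Ioo (0:ℝ) 1,
            ENNReal.ofReal ((‖u‖ ^ 2 + 1) ^ (-((n + 1 : ℝ) + α) / 2)
              * ((s ^ q - 1) * (1 - s ^ (α - 1 - q)) * (1 - s) ^ (-1 - α))
              * F (emb ((s - 1) • u) (s - 1))) := by
          refine setLIntegral_mono' hBmeas (fun u hu => hinner u ?_)
          rw [hBdef] at hu
          simpa [mem_closedBall, dist_zero_right] using hu
      _ ≤ ∫⁻ u, ∫⁻ s in Ioo (0:ℝ) 1,
            ENNReal.ofReal ((‖u‖ ^ 2 + 1) ^ (-((n + 1 : ℝ) + α) / 2)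
              * ((s ^ q - 1) * (1 - s ^ (α - 1 - q)) * (1 - s) ^ (-1 - α))
              * F (emb ((s - 1) • u) (s - 1))) := setLIntegral_le_lintegral _ _
      _ = Cconst n α q F := rfl
  calc (x : ℝ≥0∞) = K * ((x : ℝ≥0∞) * K⁻¹) := by
        rw [mul_comm (x : ℝ≥0∞) K⁻¹, ← mul_assoc, ENNReal.mul_inv_cancel hK0 hKtop, one_mul]
    _ < K * (∫⁻ s in Ioo (δ m) 2⁻¹, h' s) := (ENNReal.mul_lt_mul_iff_right hK0 hKtop).mpr hm
    _ ≤ Cconst n α q F := hKJ
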